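/- arXiv:math/0411127 — 4 statements merged into one kernel-verified Lean document; each statement's English description precedes it below -/
import Mathlib

section
/- The map w ↦ I_w, where for w = (c₁,...,cₙ) ∈ ℤⁿ the set I_w = {1 + c₁n, 2 + c₂n, ..., n + cₙn} + nℤ≥0 (i.e., the set {j + c_j n + mn : 1 ≤ j ≤ n, m ≥ 0} listed in increasing order), is a bijection from ℤⁿ onto the collection of almost natural subsets I of ℤ satisfying τI ⊆ I, where τ(i) = i + n. Moreover the virtual cardinality of I_w is ‖I_w‖ = −(c₁ + ⋯ + cₙ). -/
/-- The positive integers ℤ₊ = {i : 1 ≤ i} as a subset of ℤ. -/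
def Zplus : Set ℤ := {i : ℤ | 1 ≤ i}

/-- A subset I ⊆ ℤ is almost natural if both I ∖ ℤ₊ and ℤ₊ ∖ I are finite. -/
def AlmostNatural (I : Set ℤ) : Prop := (I \ Zplus).Finite ∧ (Zplus \ I).Finite

/-- The virtual cardinality ‖I‖ = |I ∖ ℤ₊| − |ℤ₊ ∖ I| ∈ ℤ. -/
noncomputable def vcard (I : Set ℤ) : ℤ :=
  ((I \ Zplus).ncard : ℤ) - ((Zplus \ I).ncard : ℤ)

/-- The set I_w associated to w = (c₁,...,cₙ) ∈ ℤⁿ (here 0-indexed by Fin n, so the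
1-based index of j : Fin n is j+1):  I_w = {(j+1) + (cⱼ + m)·n : j ∈ Fin n, m ≥ 0}. -/
def Iset (n : ℕ) (w : Fin n → ℤ) : Set ℤ :=
  {x : ℤ | ∃ (j : Fin n) (m : ℕ), x = ((j : ℤ) + 1) + (w j + (m : ℤ)) * n}

namespace IsetAux
variable {n : ℕ}

lemma decomp_unique (hn : 1 ≤ n) {j j' : Fin n} {k k' : ℤ}
    (h : (j:ℤ) + 1 + k * n = (j':ℤ) + 1 + k' * n) : j = j' ∧ k = k' := by
  have hj : (j:ℤ) < n := by exact_mod_cast j.2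
  have hj' : (j':ℤ) < n := by exact_mod_cast j'.2
  have hj0 : (0:ℤ) ≤ j := Int.natCast_nonneg _
  have hj0' : (0:ℤ) ≤ j' := Int.natCast_nonneg _
  have hn' : (0:ℤ) < n := by exact_mod_cast hn
  have key : (j:ℤ) - j' = (k' - k) * n := by linarith
  have hd : k' - k = 0 := by
    rcases lt_trichotomy (k' - k) 0 with h1 | h1 | h1
    · have h2 : (k' - k) * n ≤ (-1) * n := mul_le_mul_of_nonneg_right (by omega) (le_of_lt hn')
      linarith
    · exact h1
    · have h2 : (1:ℤ) * n ≤ (k' - k) * n := mul_le_mul_of_nonneg_right (by omega) (le_of_lt hn')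
      linarith
  have hk : k = k' := by omega
  refine ⟨?_, hk⟩
  have : (j:ℤ) = j' := by rw [hd] at key; omega
  exact Fin.ext (by exact_mod_cast this)

lemma recon (hn : 1 ≤ n) (x : ℤ) : ∃ (j : Fin n) (k : ℤ), x = (j:ℤ) + 1 + k * n := by
  have hn' : (0:ℤ) < n := by exact_mod_cast hn
  have h1 : 0 ≤ (x - 1) % n := Int.emod_nonneg _ (ne_of_gt hn')
  have h2 : (x - 1) % n < n := Int.emod_lt_of_pos _ hn'
  refine ⟨⟨((x-1) % n).toNat, by omega⟩, (x-1) / n, ?_⟩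
  have h3 : ((x-1) % n).toNat = ((x-1) % n) := Int.toNat_of_nonneg h1
  have h4 : (x-1) % n + n * ((x-1) / n) = x - 1 := Int.emod_add_mul_ediv _ _
  push_cast [h3]
  linarith

lemma mem_iff (hn : 1 ≤ n) (w : Fin n → ℤ) (j : Fin n) (k : ℤ) :
    ((j:ℤ) + 1 + k * n) ∈ Iset n w ↔ w j ≤ k := by
  constructor
  · rintro ⟨j', m, heq⟩
    obtain ⟨hje, hke⟩ := decomp_unique hn heq
    subst hje
    have : (0:ℤ) ≤ m := Int.natCast_nonneg _
    omega
  · intro hwk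
    refine ⟨j, (k - w j).toNat, ?_⟩
    have : ((k - w j).toNat : ℤ) = k - w j := Int.toNat_of_nonneg (by omega)
    rw [this]; ring

lemma pos_iff (hn : 1 ≤ n) (j : Fin n) (k : ℤ) :
    1 ≤ (j:ℤ) + 1 + k * n ↔ 0 ≤ k := by
  have hj : (j:ℤ) < n := by exact_mod_cast j.2
  have hj0 : (0:ℤ) ≤ j := Int.natCast_nonneg _
  have hn' : (0:ℤ) < n := by exact_mod_cast hn
  constructor
  · intro h; by_contra hk; push_neg at hk
    have h2 : k * n ≤ (-1) * n := mul_le_mul_of_nonneg_right (by omega) (le_of_lt hn')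
    linarith
  · intro h
    have : 0 ≤ k * n := mul_nonneg h (le_of_lt hn')
    linarith

/-- The finite set I_w ∖ ℤ₊ as a Finset. -/
noncomputable def Fneg (n : ℕ) (w : Fin n → ℤ) : Finset ℤ :=
  Finset.univ.biUnion (fun j : Fin n =>
    (Finset.Icc (w j) (-1)).image (fun k => (j:ℤ) + 1 + k * n))

/-- The finite set ℤ₊ ∖ I_w as a Finset. -/
noncomputable def Fpos (n : ℕ) (w : Fin n → ℤ) : Finset ℤ :=
  Finset.univ.biUnion (fun j : Fin n =>
    (Finset.Icc 0 (w j - 1)).image (fun k => (j:ℤ) + 1 + k * n))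

lemma neg_eq (hn : 1 ≤ n) (w : Fin n → ℤ) :
    Iset n w \ Zplus = ↑(Fneg n w) := by
  ext x
  simp only [Set.mem_diff, Fneg, Finset.coe_biUnion, Finset.mem_coe, Finset.coe_univ,
    Set.mem_iUnion, Finset.mem_image, Finset.mem_Icc, Zplus, Set.mem_setOf_eq]
  constructor
  · rintro ⟨hx, hx2⟩
    obtain ⟨j, k, rfl⟩ := recon hn x
    rw [mem_iff hn] at hx
    rw [pos_iff hn] at hx2
    exact ⟨j, trivial, k, ⟨hx, by omega⟩, rfl⟩
  · rintro ⟨j, -, k, ⟨h1, h2⟩, rfl⟩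
    rw [mem_iff hn, pos_iff hn]
    exact ⟨h1, by omega⟩

lemma pos_eq (hn : 1 ≤ n) (w : Fin n → ℤ) :
    Zplus \ Iset n w = ↑(Fpos n w) := by
  ext x
  simp only [Set.mem_diff, Fpos, Finset.coe_biUnion, Finset.mem_coe, Finset.coe_univ,
    Set.mem_iUnion, Finset.mem_image, Finset.mem_Icc, Zplus, Set.mem_setOf_eq]
  constructor
  · rintro ⟨hx, hx2⟩
    obtain ⟨j, k, rfl⟩ := recon hn x
    rw [mem_iff hn] at hx2
    rw [pos_iff hn] at hx
    exact ⟨j, trivial, k, ⟨hx, by omega⟩, rfl⟩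
  · rintro ⟨j, -, k, ⟨h1, h2⟩, rfl⟩
    rw [mem_iff hn, pos_iff hn]
    exact ⟨h1, by omega⟩

lemma inj_aff (hn : 1 ≤ n) (j : Fin n) :
    Function.Injective (fun k : ℤ => (j:ℤ) + 1 + k * n) := by
  intro a b hab
  exact (decomp_unique hn hab).2

lemma card_Fneg (hn : 1 ≤ n) (w : Fin n → ℤ) :
    (Fneg n w).card = ∑ j : Fin n, (-(w j)).toNat := by
  rw [Fneg, Finset.card_biUnion]
  · refine Finset.sum_congr rfl (fun j _ => ?_)
    rw [Finset.card_image_of_injective _ (inj_aff hn j), Int.card_Icc]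
    congr 1
    omega
  · intro a _ b _ hab
    simp only [Finset.disjoint_left, Finset.mem_image, Finset.mem_Icc]
    rintro x ⟨k, -, rfl⟩ ⟨k', -, heq⟩
    exact hab (decomp_unique hn heq.symm).1
  
lemma card_Fpos (hn : 1 ≤ n) (w : Fin n → ℤ) :
    (Fpos n w).card = ∑ j : Fin n, (w j).toNat := by
  rw [Fpos, Finset.card_biUnion]
  · refine Finset.sum_congr rfl (fun j _ => ?_)
    rw [Finset.card_image_of_injective _ (inj_aff hn j), Int.card_Icc]
    congr 1
    omega
  · intro a _ b _ hab
    simp only [Finset.disjoint_left, Finset.mem_image, Finset.mem_Icc]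
    rintro x ⟨k, -, rfl⟩ ⟨k', -, heq⟩
    exact hab (decomp_unique hn heq.symm).1

end IsetAux

open IsetAux in
/-- The map w ↦ I_w is a bijection from ℤⁿ onto the collection of almost natural subsets
I ⊆ ℤ with τI ⊆ I (τ(i) = i + n), and ‖I_w‖ = −(c₁ + ⋯ + cₙ). -/
theorem Iset_bijection (n : ℕ) (hn : 1 ≤ n) :
    (∀ w : Fin n → ℤ, AlmostNatural (Iset n w) ∧ (∀ x ∈ Iset n w, x + n ∈ Iset n w) ∧
        vcard (Iset n w) = -(∑ j, w j)) ∧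
    (∀ w w' : Fin n → ℤ, Iset n w = Iset n w' → w = w') ∧
    (∀ I : Set ℤ, AlmostNatural I → (∀ x ∈ I, x + n ∈ I) →
        ∃ w : Fin n → ℤ, Iset n w = I) := by
  classical
  have hn' : (0:ℤ) < n := by exact_mod_cast hn
  refine ⟨fun w => ⟨⟨?_, ?_⟩, ?_, ?_⟩, ?_, ?_⟩
  · rw [neg_eq hn w]; exact (Fneg n w).finite_toSet
  · rw [pos_eq hn w]; exact (Fpos n w).finite_toSet
  · -- tau stability
    intro x hx
    obtain ⟨j, k, rfl⟩ := recon hn x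
    rw [mem_iff hn] at hx
    have h2 : (j:ℤ) + 1 + k * n + n = (j:ℤ) + 1 + (k+1) * n := by ring
    rw [h2, mem_iff hn]
    omega
  · -- vcard
    rw [vcard, neg_eq hn w, pos_eq hn w, Set.ncard_coe_finset, Set.ncard_coe_finset,
      card_Fneg hn w, card_Fpos hn w]
    push_cast
    rw [← Finset.sum_sub_distrib, ← Finset.sum_neg_distrib]
    exact Finset.sum_congr rfl (fun j _ => by omega)
  · -- injectivity
    intro w w' h
    funext j
    have h1 : ((j:ℤ) + 1 + w j * n) ∈ Iset n w := (mem_iff hn w j (w j)).2 le_rfl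
    have h2 : ((j:ℤ) + 1 + w' j * n) ∈ Iset n w' := (mem_iff hn w' j (w' j)).2 le_rfl
    rw [h] at h1; rw [← h] at h2
    rw [mem_iff hn] at h1 h2
    omega
  · -- surjectivity
    intro I ⟨hfin1, hfin2⟩ htau
    -- lower bound for I
    obtain ⟨B, hB⟩ : ∃ B : ℤ, ∀ x ∈ I \ Zplus, B ≤ x := by
      obtain ⟨B, hB⟩ := hfin1.bddBelow
      exact ⟨B, fun x hx => hB hx⟩
    have hIlb : ∀ x ∈ I, min B 1 ≤ x := by
      intro x hx
      by_cases h : x ∈ Zplus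
      · have : 1 ≤ x := h
        omega
      · have := hB x ⟨hx, h⟩; omega
    -- upper bound for Zplus \ I
    obtain ⟨N, hN⟩ : ∃ N : ℤ, ∀ x : ℤ, N ≤ x → x ∈ I := by
      obtain ⟨C, hC⟩ := hfin2.bddAbove
      refine ⟨max (C+1) 1, fun x hx => ?_⟩
      by_contra hxI
      have hxZ : x ∈ Zplus := by simp only [Zplus, Set.mem_setOf_eq]; omega
      have := hC (⟨hxZ, hxI⟩ : x ∈ Zplus \ I)
      omega
    have key : ∀ j : Fin n, ∃ c : ℤ, ((j:ℤ) + 1 + c * n ∈ I) ∧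
        ∀ k : ℤ, ((j:ℤ) + 1 + k * n ∈ I) → c ≤ k := by
      intro j
      have hj : (j:ℤ) < n := by exact_mod_cast j.2
      have hj0 : (0:ℤ) ≤ j := Int.natCast_nonneg _
      have hbdd : ∃ b : ℤ, ∀ k : ℤ, ((j:ℤ) + 1 + k * n ∈ I) → b ≤ k := by
        refine ⟨min B 1 - n, fun k hk => ?_⟩
        have hx := hIlb _ hk
        rcases le_or_gt 0 k with h | h
        · omega
        · have : k * n ≤ k * 1 := mul_le_mul_of_nonpos_left (by exact_mod_cast hn) (le_of_lt h)
          omega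
      have hinh : ∃ k : ℤ, ((j:ℤ) + 1 + k * n ∈ I) := by
        refine ⟨max N 0, hN _ ?_⟩
        have h0 : (0:ℤ) ≤ max N 0 := le_max_right _ _
        have : max N 0 * 1 ≤ max N 0 * n := mul_le_mul_of_nonneg_left (by exact_mod_cast hn) h0
        have h2 : N ≤ max N 0 := le_max_left _ _
        omega
      obtain ⟨c, hc1, hc2⟩ := Int.exists_least_of_bdd hbdd hinh
      exact ⟨c, hc1, hc2⟩
    choose w hw1 hw2 using key
    refine ⟨w, ?_⟩
    ext x
    constructor
    · rintro ⟨j, m, rfl⟩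
      induction m with
      | zero => simpa using hw1 j
      | succ m ih =>
        have h2 : (j:ℤ) + 1 + (w j + ((m:ℤ)+1)) * n = ((j:ℤ) + 1 + (w j + m) * n) + n := by
          ring
        push_cast [h2]
        exact htau _ ih
    · intro hx
      obtain ⟨j, k, rfl⟩ := recon hn x
      have hle := hw2 j k hx
      refine ⟨j, (k - w j).toNat, ?_⟩
      have : ((k - w j).toNat : ℤ) = k - w j := Int.toNat_of_nonneg (by omega)
      rw [this]; ring
end

section
/- Let n ≥ 2, r ≥ 1 and 1 ≤ j ≤ n. The number of strictly increasing r-tuples (s₁ < ⋯ < s_r) of positive integers with s_r ∈ [(r−1)n+j, rn], s_{i+1} − s_i ≤ n for all i, and s_i ≥ (i−1)n+1 for all i, equals n^{r−1}(n+1−j). -/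
/-- An admissible r-tuple (s₁ < ⋯ < s_r) (0-indexed here: sⱼ = s(j−1)): strictly
increasing, with s j ≥ (j−1)n+1 (0-indexed: s j ≥ j·n + 1), consecutive gaps at most n,
and last entry s_r ≤ r·n. -/
def AdmissibleTuple (n r : ℕ) (s : Fin r → ℤ) : Prop :=
  StrictMono s ∧
  (∀ j : Fin r, ((j : ℕ) : ℤ) * n + 1 ≤ s j) ∧
  (∀ j k : Fin r, (k : ℕ) = (j : ℕ) + 1 → s k ≤ s j + n) ∧
  (∀ j : Fin r, (j : ℕ) = r - 1 → s j ≤ (r : ℤ) * n)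

section Aux
variable (n r' j : ℕ)

/-- gap function from data -/
def auxD (d : Fin r' → Fin n) : ℕ → ℤ :=
  fun k => if h : k < r' then ((d ⟨k, h⟩ : ℕ) : ℤ) + 1 else 0

def auxS (d : Fin r' → Fin n) (a : ℕ) : Fin (r' + 1) → ℤ :=
  fun i => ((r' : ℤ) * n + j + a) - ∑ k ∈ Finset.Ico (i : ℕ) r', auxD n r' d k

lemma auxD_pos (d : Fin r' → Fin n) {k : ℕ} (hk : k < r') : 1 ≤ auxD n r' d k := by
  simp [auxD, hk]

lemma auxD_le (d : Fin r' → Fin n) {k : ℕ} (hk : k < r') : auxD n r' d k ≤ n := by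
  have := (d ⟨k, hk⟩).isLt
  simp only [auxD, dif_pos hk]
  omega

lemma auxS_sum_le (d : Fin r' → Fin n) {i : ℕ} :
    ∑ k ∈ Finset.Ico i r', auxD n r' d k ≤ ((r' - i : ℕ) : ℤ) * n := by
  calc ∑ k ∈ Finset.Ico i r', auxD n r' d k ≤ ∑ k ∈ Finset.Ico i r', (n : ℤ) := by
        refine Finset.sum_le_sum fun k hk => auxD_le n r' d (Finset.mem_Ico.mp hk).2
    _ = ((r' - i : ℕ) : ℤ) * n := by simp [Finset.sum_const, Nat.card_Ico, mul_comm]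

end Aux

section Aux2
variable (n r' j : ℕ)

lemma auxS_admissible (hn : 2 ≤ n) (hj1 : 1 ≤ j) (hjn : j ≤ n)
    (d : Fin r' → Fin n) (a : ℕ) (ha : a < n + 1 - j) :
    AdmissibleTuple n (r' + 1) (auxS n r' j d a) ∧
      ∀ i : Fin (r' + 1), (i : ℕ) = (r' + 1) - 1 →
        (((r' + 1 : ℕ) : ℤ) - 1) * n + j ≤ auxS n r' j d a i := by
  have hsumdiff : ∀ i i' : Fin (r' + 1), (i : ℕ) ≤ (i' : ℕ) →
      auxS n r' j d a i' - auxS n r' j d a i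
        = ∑ k ∈ Finset.Ico (i : ℕ) (i' : ℕ), auxD n r' d k := by
    intro i i' h
    have h2 : (i' : ℕ) ≤ r' := Nat.lt_succ_iff.mp i'.isLt
    have := Finset.sum_Ico_consecutive (auxD n r' d) h h2
    simp only [auxS]
    omega
  have hmono : StrictMono (auxS n r' j d a) := by
    intro i i' h
    have h' : (i : ℕ) < (i' : ℕ) := h
    have hd := hsumdiff i i' h'.le
    have hge : (1 : ℤ) ≤ ∑ k ∈ Finset.Ico (i : ℕ) (i' : ℕ), auxD n r' d k := by
      calc (1 : ℤ) ≤ ∑ k ∈ Finset.Ico (i : ℕ) (i' : ℕ), 1 := by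
            rw [Finset.sum_const, Nat.card_Ico]; simp; omega
        _ ≤ _ := Finset.sum_le_sum fun k hk => by
            have hk' := Finset.mem_Ico.mp hk
            exact auxD_pos n r' d (lt_of_lt_of_le hk'.2 (Nat.lt_succ_iff.mp i'.isLt))
    omega
  refine ⟨⟨hmono, ?_, ?_, ?_⟩, ?_⟩
  · intro i
    have hi : (i : ℕ) ≤ r' := Nat.lt_succ_iff.mp i.isLt
    have hb := auxS_sum_le n r' d (i := (i : ℕ))
    have hcast : ((r' - (i : ℕ) : ℕ) : ℤ) = (r' : ℤ) - (i : ℕ) := by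
      push_cast [Nat.cast_sub hi]; ring
    rw [hcast] at hb
    simp only [auxS]
    have ha' : (0:ℤ) ≤ (a:ℤ) := Int.natCast_nonneg a
    have hj' : (1:ℤ) ≤ (j:ℤ) := by exact_mod_cast hj1
    linarith [hb]
  · intro i k hk
    have hkr : (k : ℕ) ≤ r' := Nat.lt_succ_iff.mp k.isLt
    have hir : (i : ℕ) < r' := by omega
    have hd := hsumdiff i k (by omega)
    rw [hk] at hd
    rw [Finset.sum_Ico_succ_top (by omega), Finset.Ico_self, Finset.sum_empty, zero_add] at hd
    have := auxD_le n r' d hir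
    omega
  · intro i hi
    have hd : auxS n r' j d a i = (r' : ℤ) * n + j + a := by
      simp only [auxS, hi]
      simp
    rw [hd]
    have : ((r' + 1 : ℕ) : ℤ) * n = (r' : ℤ) * n + n := by push_cast; ring
    omega
  · intro i hi
    have hd : auxS n r' j d a i = (r' : ℤ) * n + j + a := by
      simp only [auxS, hi]
      simp
    rw [hd]
    have ha' : (0:ℤ) ≤ (a:ℤ) := Int.natCast_nonneg a
    have h2 : (((r' + 1 : ℕ) : ℤ) - 1) * n = (r':ℤ) * n := by push_cast; ring
    omega

end Aux2

section Aux3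
variable {n r' j : ℕ}

lemma auxS_left_inv (s : Fin (r' + 1) → ℤ) (d : Fin r' → Fin n) (a : ℕ)
    (hd : ∀ k : Fin r', ((d k : ℕ) : ℤ) + 1 = s k.succ - s k.castSucc)
    (ha : (a : ℤ) = s (Fin.last r') - ((r' : ℤ) * n + j)) :
    auxS n r' j d a = s := by
  set f : ℕ → ℤ := fun k => if h : k < r' + 1 then s ⟨k, h⟩ else 0 with hf
  have key : ∀ i : ℕ, (h : i ≤ r') → ∑ k ∈ Finset.Ico i r', auxD n r' d k
      = s (Fin.last r') - s ⟨i, by omega⟩ := by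
    intro i hi
    have step : ∑ k ∈ Finset.Ico i r', auxD n r' d k
        = ∑ k ∈ Finset.Ico i r', (f (k + 1) - f k) := by
      refine Finset.sum_congr rfl fun k hk => ?_
      have hk' : k < r' := (Finset.mem_Ico.mp hk).2
      have h1 : auxD n r' d k = ((d ⟨k, hk'⟩ : ℕ) : ℤ) + 1 := by simp [auxD, hk']
      rw [h1, hd ⟨k, hk'⟩]
      have e1 : f (k + 1) = s ⟨k + 1, by omega⟩ := by simp [hf, dif_pos (by omega : k + 1 < r' + 1), hk']
      have e2 : f k = s ⟨k, by omega⟩ := by simp [hf, dif_pos (by omega : k < r' + 1), hk'.le]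
      rw [e1, e2]
      congr 1
    rw [step, Finset.sum_Ico_eq_sub _ hi, Finset.sum_range_sub f, Finset.sum_range_sub f]
    have e3 : f r' = s (Fin.last r') := by simp [hf, Fin.last]
    have e4 : f i = s ⟨i, by omega⟩ := by simp [hf, dif_pos (by omega : i < r' + 1), hi]
    rw [e3, e4]; ring
  funext i
  have hi : (i : ℕ) ≤ r' := Nat.lt_succ_iff.mp i.isLt
  have := key (i : ℕ) hi
  simp only [auxS, this]
  have : (⟨(i : ℕ), by omega⟩ : Fin (r' + 1)) = i := by ext; rfl
  rw [this]
  omega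

end Aux3


/-- The number of admissible r-tuples whose last entry additionally satisfies
s_r ≥ (r−1)n + j equals n^{r−1}·(n+1−j), for 1 ≤ j ≤ n. -/
theorem card_admissible_with_lower_bound (n r j : ℕ) (hn : 2 ≤ n) (hr : 1 ≤ r)
    (hj1 : 1 ≤ j) (hjn : j ≤ n) :
    Nat.card {s : Fin r → ℤ // AdmissibleTuple n r s ∧
        ∀ i : Fin r, (i : ℕ) = r - 1 → ((r : ℤ) - 1) * n + j ≤ s i} =
      n ^ (r - 1) * (n + 1 - j) := by
  obtain ⟨r', rfl⟩ : ∃ r', r = r' + 1 := ⟨r - 1, (Nat.succ_pred_eq_of_pos hr).symm⟩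
  have hbase : (((r' + 1 : ℕ) : ℤ) - 1) * n = (r' : ℤ) * n := by push_cast; ring
  have e : {s : Fin (r' + 1) → ℤ // AdmissibleTuple n (r' + 1) s ∧
        ∀ i : Fin (r' + 1), (i : ℕ) = (r' + 1) - 1 →
          (((r' + 1 : ℕ) : ℤ) - 1) * n + j ≤ s i} ≃
      ((Fin r' → Fin n) × Fin (n + 1 - j)) := by
    refine
      { toFun := fun s =>
          ⟨fun i => ⟨(s.1 i.succ - s.1 i.castSucc - 1).toNat, ?_⟩,
            ⟨(s.1 (Fin.last r') - ((r' : ℤ) * n + j)).toNat, ?_⟩⟩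
        invFun := fun p => ⟨auxS n r' j p.1 p.2,
          auxS_admissible n r' j hn hj1 hjn p.1 p.2 p.2.isLt⟩
        left_inv := ?_, right_inv := ?_ }
    · -- d i < n
      have h1 : s.1 i.castSucc < s.1 i.succ := s.2.1.1 (Fin.castSucc_lt_succ : i.castSucc < i.succ)
      have h2 : s.1 i.succ ≤ s.1 i.castSucc + n :=
        s.2.1.2.2.1 i.castSucc i.succ (by simp)
      omega
    · -- a < n + 1 - j
      have h1 : s.1 (Fin.last r') ≤ ((r' + 1 : ℕ) : ℤ) * n :=
        s.2.1.2.2.2 (Fin.last r') (by simp)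
      have h2 : (((r' + 1 : ℕ) : ℤ) - 1) * n + j ≤ s.1 (Fin.last r') :=
        s.2.2 (Fin.last r') (by simp)
      have h3 : ((r' + 1 : ℕ) : ℤ) * n = (r' : ℤ) * n + n := by push_cast; ring
      omega
    · -- left_inv
      rintro ⟨s, hs, hlow⟩
      apply Subtype.ext
      apply auxS_left_inv
      · intro k
        have h1 : s k.castSucc < s k.succ := hs.1 (Fin.castSucc_lt_succ : k.castSucc < k.succ)
        try dsimp only
        omega
      · have h2 : (((r' + 1 : ℕ) : ℤ) - 1) * n + j ≤ s (Fin.last r') :=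
          hlow (Fin.last r') (by simp)
        try dsimp only
        omega
    · -- right_inv
      rintro ⟨d, a⟩
      dsimp only
      refine Prod.ext (funext fun i => ?_) ?_
      · apply Fin.ext
        have hsum : auxS n r' j d a i.succ - auxS n r' j d a i.castSucc
            = auxD n r' d (i : ℕ) := by
          simp only [auxS, Fin.coe_castSucc, Fin.val_succ]
          rw [Finset.sum_eq_sum_Ico_succ_bot i.isLt]
          ring
        have hD : auxD n r' d (i : ℕ) = ((d i : ℕ) : ℤ) + 1 := by
          simp [auxD, i.isLt]
        try dsimp only
        omega
      · apply Fin.ext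
        have hlast : auxS n r' j d a (Fin.last r') = (r' : ℤ) * n + j + a := by
          simp [auxS, Fin.last]
        try dsimp only
        omega
  rw [Nat.card_congr e]
  simp [Nat.card_eq_fintype_card, Nat.add_sub_cancel]
end

section
/- Let n ≥ 2, r ≥ 1. The number of admissible r-tuples (s₁ < ⋯ < s_r) with s_r = (r−1)n + 1 (i.e., the last entry equals its minimum pivotal value), where admissible means s_i ≥ (i−1)n+1, gaps s_{i+1} − s_i ≤ n, and s_r ≤ rn, equals n^{r−1}. -/
namespace CardAdmissibleAux

/-- extension of a gap function to ℕ. -/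
def ext (n r : ℕ) (f : Fin (r-1) → Fin n) : ℕ → ℤ :=
  fun i => if h : i < r - 1 then ((f ⟨i, h⟩ : ℕ) : ℤ) + 1 else 0

lemma ext_ge (n r : ℕ) (f : Fin (r-1) → Fin n) {i : ℕ} (h : i < r - 1) :
    1 ≤ ext n r f i := by
  simp only [ext, dif_pos h]
  have := Int.natCast_nonneg (f ⟨i, h⟩ : ℕ)
  omega

lemma ext_le (n r : ℕ) (f : Fin (r-1) → Fin n) {i : ℕ} (h : i < r - 1) :
    ext n r f i ≤ n := by
  simp only [ext, dif_pos h]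
  have := (f ⟨i, h⟩).2
  omega

/-- the tuple built from gaps -/
def pmap (n r : ℕ) (f : Fin (r-1) → Fin n) : Fin r → ℤ :=
  fun j => ((r:ℤ)-1)*n + 1 - ∑ i ∈ Finset.Ico (j:ℕ) (r-1), ext n r f i

lemma sum_lb (n r : ℕ) (f : Fin (r-1) → Fin n) {a b : ℕ} (hb : b ≤ r - 1) :
    ((b - a : ℕ) : ℤ) ≤ ∑ i ∈ Finset.Ico a b, ext n r f i := by
  have := Finset.card_nsmul_le_sum (Finset.Ico a b) (ext n r f) 1
    (fun x hx => ext_ge n r f (lt_of_lt_of_le (Finset.mem_Ico.mp hx).2 hb))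
  simpa [Nat.card_Ico, nsmul_eq_mul] using this

lemma sum_ub (n r : ℕ) (f : Fin (r-1) → Fin n) {a b : ℕ} (hb : b ≤ r - 1) :
    ∑ i ∈ Finset.Ico a b, ext n r f i ≤ ((b - a : ℕ) : ℤ) * n := by
  have := Finset.sum_le_card_nsmul (Finset.Ico a b) (ext n r f) (n : ℤ)
    (fun x hx => ext_le n r f (lt_of_lt_of_le (Finset.mem_Ico.mp hx).2 hb))
  simpa [Nat.card_Ico, nsmul_eq_mul] using this

lemma pmap_strictMono (n r : ℕ) (f : Fin (r-1) → Fin n) : StrictMono (pmap n r f) := by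
  intro a b hab
  have hab' : (a : ℕ) < (b : ℕ) := hab
  have hb : (b : ℕ) ≤ r - 1 := by have := b.2; omega
  have hsplit : ∑ i ∈ Finset.Ico (a:ℕ) (b:ℕ), ext n r f i
      + ∑ i ∈ Finset.Ico (b:ℕ) (r-1), ext n r f i
      = ∑ i ∈ Finset.Ico (a:ℕ) (r-1), ext n r f i :=
    Finset.sum_Ico_consecutive _ (le_of_lt hab') hb
  have hpos : (0:ℤ) < ∑ i ∈ Finset.Ico (a:ℕ) (b:ℕ), ext n r f i := by
    have h2 := sum_lb n r f (a := a) (b := b) hb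
    have h3 : (1:ℤ) ≤ (((b:ℕ) - (a:ℕ) : ℕ) : ℤ) := by
      have : 1 ≤ (b:ℕ) - (a:ℕ) := by omega
      exact_mod_cast this
    linarith
  simp only [pmap]
  linarith

lemma pmap_mem (n r : ℕ) (hn : 2 ≤ n) (hr : 1 ≤ r) (f : Fin (r-1) → Fin n) :
    AdmissibleTuple n r (pmap n r f) ∧
      ∀ i : Fin r, (i : ℕ) = r - 1 → pmap n r f i = ((r : ℤ) - 1) * n + 1 := by
  have hpiv : ∀ i : Fin r, (i : ℕ) = r - 1 → pmap n r f i = ((r : ℤ) - 1) * n + 1 := by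
    intro i hi
    simp [pmap, hi]
  refine ⟨⟨pmap_strictMono n r f, ?_, ?_, ?_⟩, hpiv⟩
  · intro j
    have hj : (j : ℕ) ≤ r - 1 := by have := j.2; omega
    have h1 := sum_ub n r f (a := (j:ℕ)) (b := r - 1) le_rfl
    simp only [pmap]
    have hc : ((r - 1 - (j:ℕ) : ℕ) : ℤ) = ((r:ℤ) - 1) - (j:ℕ) := by
      push_cast [hr, hj]
      omega
    rw [hc] at h1
    nlinarith [h1]
  · intro j k hk
    have hjr : (j : ℕ) < r - 1 := by have := k.2; omega
    have hsplit : ∑ i ∈ Finset.Ico (j:ℕ) (r-1), ext n r f i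
        = ext n r f (j:ℕ) + ∑ i ∈ Finset.Ico ((j:ℕ)+1) (r-1), ext n r f i :=
      Finset.sum_eq_sum_Ico_succ_bot hjr _
    have hle := ext_le n r f hjr
    simp only [pmap, hk]
    linarith
  · intro j hj
    have := hpiv j hj
    rw [this]
    have : (1:ℤ) ≤ n := by exact_mod_cast Nat.one_le_of_lt hn
    nlinarith

lemma pmap_injective (n r : ℕ) (hr : 1 ≤ r) : Function.Injective (pmap n r) := by
  intro f g hfg
  funext j
  have hj1 : (j : ℕ) + 1 ≤ r - 1 := by have := j.2; omega
  have hjr : ((j:ℕ) : ℕ) < r := by have := j.2; omega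
  have hj1r : (j:ℕ) + 1 < r ∨ (j:ℕ)+1 = r := by omega
  -- compare pmap at ⟨j, _⟩ and ⟨j+1, _⟩
  have h0 : pmap n r f ⟨(j:ℕ), by omega⟩ = pmap n r g ⟨(j:ℕ), by omega⟩ := by rw [hfg]
  have h1 : pmap n r f ⟨(j:ℕ)+1, by omega⟩ = pmap n r g ⟨(j:ℕ)+1, by omega⟩ := by rw [hfg]
  have key : ∀ h : Fin (r-1) → Fin n,
      pmap n r h ⟨(j:ℕ), by omega⟩ - pmap n r h ⟨(j:ℕ)+1, by omega⟩ = - ext n r h (j:ℕ) := by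
    intro h
    have hsplit : ∑ i ∈ Finset.Ico (j:ℕ) (r-1), ext n r h i
        = ext n r h (j:ℕ) + ∑ i ∈ Finset.Ico ((j:ℕ)+1) (r-1), ext n r h i :=
      Finset.sum_eq_sum_Ico_succ_bot (by omega) _
    simp only [pmap]
    linarith
  have hext : ext n r f (j:ℕ) = ext n r g (j:ℕ) := by
    have kf := key f
    have kg := key g
    linarith
  simp only [ext, dif_pos j.2] at hext
  ext
  exact_mod_cast (by omega : ((f ⟨(j:ℕ), j.2⟩ : ℕ) : ℤ) = ((g ⟨(j:ℕ), j.2⟩ : ℕ) : ℤ))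

end CardAdmissibleAux

namespace CardAdmissibleAux

lemma telescope (T : ℕ → ℤ) (a : ℕ) : ∀ b : ℕ, a ≤ b →
    ∑ i ∈ Finset.Ico a b, (T (i+1) - T i) = T b - T a := by
  intro b hab
  induction b, hab using Nat.le_induction with
  | base => simp
  | succ b hab ih =>
    rw [Finset.sum_Ico_succ_top hab, ih]; ring

lemma pmap_surj (n r : ℕ) (hn : 2 ≤ n) (hr : 1 ≤ r) (s : Fin r → ℤ)
    (hadm : AdmissibleTuple n r s)
    (hpiv : ∀ i : Fin r, (i : ℕ) = r - 1 → s i = ((r : ℤ) - 1) * n + 1) :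
    ∃ f, pmap n r f = s := by
  obtain ⟨hmono, hlb, hgap, hub⟩ := hadm
  have hgap1 : ∀ i : ℕ, (h : i < r - 1) →
      1 ≤ s ⟨i+1, by omega⟩ - s ⟨i, by omega⟩ ∧ s ⟨i+1, by omega⟩ - s ⟨i, by omega⟩ ≤ n := by
    intro i h
    constructor
    · have := hmono (show (⟨i, by omega⟩ : Fin r) < ⟨i+1, by omega⟩ by
        simp [Fin.lt_def])
      omega
    · have := hgap ⟨i, by omega⟩ ⟨i+1, by omega⟩ rfl
      omega
  refine ⟨fun j => ⟨(s ⟨(j:ℕ)+1, by have := j.2; omega⟩ - s ⟨(j:ℕ), by have := j.2; omega⟩ - 1).toNat, ?_⟩, ?_⟩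
  · have h1 := hgap1 (j:ℕ) j.2
    omega
  · funext j
    set T : ℕ → ℤ := fun i => if h : i < r then s ⟨i, h⟩ else 0 with hT
    have hext : ∀ i ∈ Finset.Ico (j:ℕ) (r-1),
        ext n r (fun j => ⟨(s ⟨(j:ℕ)+1, by have := j.2; omega⟩ - s ⟨(j:ℕ), by have := j.2; omega⟩ - 1).toNat, by have h1 := hgap1 (j:ℕ) j.2; omega⟩) i = T (i+1) - T i := by
      intro i hi
      have hi' : i < r - 1 := (Finset.mem_Ico.mp hi).2
      have h1 := hgap1 i hi'
      simp only [ext, dif_pos hi', hT]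
      rw [dif_pos (show i + 1 < r by omega), dif_pos (show i < r by omega)]
      omega
    rw [pmap, Finset.sum_congr rfl hext,
      telescope T (j:ℕ) (r-1) (by have := j.2; omega)]
    have hTr : T (r-1) = ((r:ℤ) - 1) * n + 1 := by
      rw [hT]
      simp only [dif_pos (show r - 1 < r by omega)]
      exact hpiv ⟨r-1, by omega⟩ rfl
    have hTj : T (j:ℕ) = s j := by
      rw [hT]
      simp only [dif_pos j.2]
    rw [hTr, hTj]
    ring

end CardAdmissibleAux

open CardAdmissibleAux in
/-- The number of admissible r-tuples with last entry equal to (r−1)n + 1 is n^{r−1}. -/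
theorem card_admissible_last_pivot (n r : ℕ) (hn : 2 ≤ n) (hr : 1 ≤ r) :
    Nat.card {s : Fin r → ℤ // AdmissibleTuple n r s ∧
        ∀ i : Fin r, (i : ℕ) = r - 1 → s i = ((r : ℤ) - 1) * n + 1} =
      n ^ (r - 1) := by
  have hbij : Function.Bijective (fun f : Fin (r-1) → Fin n =>
      (⟨pmap n r f, pmap_mem n r hn hr f⟩ :
        {s : Fin r → ℤ // AdmissibleTuple n r s ∧
          ∀ i : Fin r, (i : ℕ) = r - 1 → s i = ((r : ℤ) - 1) * n + 1})) := by
    constructor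
    · intro f g h
      exact pmap_injective n r hr (congrArg Subtype.val h)
    · rintro ⟨s, hadm, hpiv⟩
      obtain ⟨f, hf⟩ := pmap_surj n r hn hr s hadm hpiv
      exact ⟨f, Subtype.ext hf⟩
  rw [← Nat.card_eq_of_bijective _ hbij]
  simp [Nat.card_eq_fintype_card]
end

section
/- Let K be an algebraically closed field and let N, N' be nilpotent n×n matrices with Jordan types μ' and μ respectively. Then N' lies in the Zariski closure of the conjugation orbit of N if and only if μ' ≤ μ in the dominance order. Equivalently (the rank formulation): rank(N'^i) ≤ rank(N^i) for all i ≥ 1 if and only if μ' ≤ μ in dominance order. -/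
section Aux

variable {K : Type*} [Field K] {n : ℕ}

/-- The shift (Jordan) operator on a direct sum of Jordan blocks. -/
noncomputable def shiftMap (K : Type*) [Field K] {n : ℕ} (μ : Fin n → ℕ) :
    ((k : Fin n) → Fin (μ k) → K) →ₗ[K] ((k : Fin n) → Fin (μ k) → K) where
  toFun x k i := if h : (i : ℕ) + 1 < μ k then x k ⟨(i : ℕ) + 1, h⟩ else 0
  map_add' x y := by
    funext k i
    by_cases h : (i : ℕ) + 1 < μ k <;> simp [h]
  map_smul' c x := by
    funext k i
    by_cases h : (i : ℕ) + 1 < μ k <;> simp [h]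

lemma shiftMap_pow (μ : Fin n → ℕ) (m : ℕ) (x : (k : Fin n) → Fin (μ k) → K)
    (k : Fin n) (i : Fin (μ k)) :
    ((shiftMap K μ ^ m) x) k i =
      if h : (i : ℕ) + m < μ k then x k ⟨(i : ℕ) + m, h⟩ else 0 := by
  induction m generalizing x with
  | zero => simp [i.isLt]
  | succ m ih =>
    have hstep : (shiftMap K μ ^ (m + 1)) x = (shiftMap K μ ^ m) (shiftMap K μ x) := by
      rw [pow_succ]; rfl
    rw [hstep, ih]
    by_cases h : (i : ℕ) + m < μ k
    · by_cases h2 : (i : ℕ) + (m + 1) < μ k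
      · have h3 : ((⟨(i : ℕ) + m, h⟩ : Fin (μ k)) : ℕ) + 1 < μ k := by
          simpa [add_assoc] using h2
        simp only [h, dif_pos, h2, shiftMap, LinearMap.coe_mk, AddHom.coe_mk, h3]
        exact congrArg (x k) (Fin.ext (by simp [add_assoc]))
      · have h3 : ¬ ((⟨(i : ℕ) + m, h⟩ : Fin (μ k)) : ℕ) + 1 < μ k := by
          simpa [add_assoc] using h2
        simp [h, h2, shiftMap, h3]
    · have h2 : ¬ (i : ℕ) + (m + 1) < μ k := fun hc => h (by omega)
      simp [h, h2]

lemma rank_pow_eq (μ : Fin n → ℕ) (N : Matrix (Fin n) (Fin n) K)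
    (e : (Fin n → K) ≃ₗ[K] ((k : Fin n) → Fin (μ k) → K))
    (he : ∀ (v : Fin n → K) (k : Fin n) (i : Fin (μ k)),
      e (N.mulVec v) k i =
        if h : (i : ℕ) + 1 < μ k then e v k ⟨(i : ℕ) + 1, h⟩ else 0)
    (m : ℕ) : (N ^ m).rank = ∑ k, (μ k - m) := by
  classical
  set S := shiftMap K μ with hS
  have hconj : ∀ v : Fin n → K, e (N.mulVec v) = S (e v) := by
    intro v
    funext k i
    rw [he]
    rfl
  have hpow : ∀ m : ℕ, (N ^ m).mulVecLin =
      (e.symm.toLinearMap ∘ₗ (S ^ m)) ∘ₗ e.toLinearMap := by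
    intro m
    induction m with
    | zero =>
      refine LinearMap.ext fun v => ?_
      simp
    | succ m ih =>
      refine LinearMap.ext fun v => ?_
      have h1 : (N ^ (m + 1)).mulVecLin v = (N ^ m).mulVecLin (N.mulVec v) := by
        rw [pow_succ, Matrix.mulVecLin_mul]; rfl
      rw [h1, ih]
      simp only [LinearMap.coe_comp, Function.comp_apply, LinearEquiv.coe_coe]
      rw [hconj, pow_succ]
      simp [Module.End.mul_apply]
  let q : ((k : Fin n) → Fin (μ k) → K) →ₗ[K] ((k : Fin n) → Fin (μ k - m) → K) :=
    { toFun := fun x k i => x k ⟨(i : ℕ) + m, by have := i.isLt; omega⟩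
      map_add' := fun x y => rfl
      map_smul' := fun c x => rfl }
  let p : ((k : Fin n) → Fin (μ k - m) → K) →ₗ[K] ((k : Fin n) → Fin (μ k) → K) :=
    { toFun := fun y k i => if h : (i : ℕ) < μ k - m then y k ⟨i, h⟩ else 0
      map_add' := fun x y => by
        funext k i
        by_cases h : (i : ℕ) < μ k - m <;> simp [h]
      map_smul' := fun c x => by
        funext k i
        by_cases h : (i : ℕ) < μ k - m <;> simp [h] }
  have hfact : S ^ m = p ∘ₗ q := by
    refine LinearMap.ext fun x => funext fun k => funext fun i => ?_
    rw [LinearMap.coe_comp, Function.comp_apply, shiftMap_pow]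
    by_cases h : (i : ℕ) + m < μ k
    · have h' : (i : ℕ) < μ k - m := by omega
      simp [p, q, h, h']
    · have h' : ¬ (i : ℕ) < μ k - m := by omega
      simp [p, h, h']
  have hq : Function.Surjective q := by
    intro y
    refine ⟨fun k j => if h : m ≤ (j : ℕ) ∧ (j : ℕ) - m < μ k - m
        then y k ⟨(j : ℕ) - m, h.2⟩ else 0, ?_⟩
    funext k i
    have h1 : m ≤ (i : ℕ) + m ∧ (i : ℕ) + m - m < μ k - m := by
      refine ⟨by omega, by simpa using i.isLt⟩
    simp only [q, LinearMap.coe_mk, AddHom.coe_mk, h1, dif_pos]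
    exact congrArg (y k) (Fin.ext (by simp))
  have hp : Function.Injective p := by
    rw [injective_iff_map_eq_zero]
    intro y hy
    funext k i
    have h2 : (i : ℕ) < μ k := by have := i.isLt; omega
    have h3 := congrFun (congrFun hy k) ⟨(i : ℕ), h2⟩
    simpa [p, i.isLt] using h3
  have hrankS : Module.finrank K (LinearMap.range (S ^ m)) = ∑ k, (μ k - m) := by
    rw [hfact, LinearMap.range_comp, LinearMap.range_eq_top.mpr hq, Submodule.map_top]
    rw [← (LinearEquiv.ofInjective p hp).finrank_eq, Module.finrank_pi_fintype]
    congr 1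
    funext k
    rw [Module.finrank_fin_fun]
  rw [Matrix.rank, hpow,
    LinearMap.range_comp_of_range_eq_top _ (LinearMap.range_eq_top.mpr e.surjective),
    LinearMap.range_comp, ← hrankS]
  exact LinearEquiv.finrank_map_eq e.symm _

lemma dominance_combo {n : ℕ} (μ μ' : Fin n → ℕ) (hμ : Antitone μ) (hμ' : Antitone μ')
    (hsum : ∑ k, μ k = n) (hsum' : ∑ k, μ' k = n) :
    (∀ i : ℕ, 1 ≤ i → ∑ k, (μ' k - i) ≤ ∑ k, (μ k - i)) ↔
      (∀ j : Fin n, ∑ i ∈ Finset.Iic j, μ' i ≤ ∑ i ∈ Finset.Iic j, μ i) := by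
  classical
  constructor
  · intro h j
    by_cases hz : μ j = 0
    · have houter : ∀ k ∈ Finset.univ, k ∉ Finset.Iic j → μ k = 0 := by
        intro k _ hk
        have hjk : j ≤ k := (lt_of_not_ge (by simpa [Finset.mem_Iic] using hk)).le
        have := hμ hjk
        omega
      have h1 : ∑ i ∈ Finset.Iic j, μ i = ∑ k, μ k :=
        Finset.sum_subset (Finset.subset_univ _) houter
      have h2 : ∑ i ∈ Finset.Iic j, μ' i ≤ ∑ k, μ' k :=
        Finset.sum_le_sum_of_subset (Finset.subset_univ _)
      omega
    · set i := μ j with hi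
      have hi1 : 1 ≤ i := Nat.one_le_iff_ne_zero.mpr hz
      have key := h i hi1
      have hcard : (Finset.Iic j).card * i = ∑ _k ∈ Finset.Iic j, i := by
        rw [Finset.sum_const, smul_eq_mul]
      calc ∑ k ∈ Finset.Iic j, μ' k
          ≤ ∑ k ∈ Finset.Iic j, (i + (μ' k - i)) := by
            apply Finset.sum_le_sum
            intro k _
            omega
        _ = (Finset.Iic j).card * i + ∑ k ∈ Finset.Iic j, (μ' k - i) := by
            rw [hcard, ← Finset.sum_add_distrib]
        _ ≤ (Finset.Iic j).card * i + ∑ k, (μ' k - i) := by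
            gcongr
            exact Finset.subset_univ _
        _ ≤ (Finset.Iic j).card * i + ∑ k, (μ k - i) := by gcongr
        _ = (Finset.Iic j).card * i + ∑ k ∈ Finset.Iic j, (μ k - i) := by
            congr 1
            refine (Finset.sum_subset (Finset.subset_univ _) ?_).symm
            intro k _ hk
            have hjk : j ≤ k := (lt_of_not_ge (by simpa [Finset.mem_Iic] using hk)).le
            have := hμ hjk
            omega
        _ = ∑ k ∈ Finset.Iic j, (i + (μ k - i)) := by
            rw [hcard, ← Finset.sum_add_distrib]
        _ = ∑ k ∈ Finset.Iic j, μ k := by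
            apply Finset.sum_congr rfl
            intro k hk
            have := hμ (Finset.mem_Iic.mp hk)
            omega
  · intro h i hi1
    by_cases hT : (Finset.univ.filter (fun k => i < μ' k)).Nonempty
    · set j := (Finset.univ.filter (fun k => i < μ' k)).max' hT with hj
      have hjmem : i < μ' j := by
        have := (Finset.univ.filter (fun k => i < μ' k)).max'_mem hT
        simpa using this
      have hge : ∀ k ≤ j, i ≤ μ' k := fun k hk => le_of_lt (lt_of_lt_of_le hjmem (hμ' hk))
      have hzero : ∀ k, j < k → μ' k - i = 0 := by
        intro k hk
        by_contra hc
        have h1 : i < μ' k := by omega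
        have : k ≤ j := Finset.le_max' _ k (by simpa using h1)
        omega
      have hcard : (Finset.Iic j).card * i = ∑ _k ∈ Finset.Iic j, i := by
        rw [Finset.sum_const, smul_eq_mul]
      have e1 : ∑ k, (μ' k - i) = ∑ k ∈ Finset.Iic j, (μ' k - i) := by
        refine (Finset.sum_subset (Finset.subset_univ _) ?_).symm
        intro k _ hk
        exact hzero k (lt_of_not_ge (by simpa [Finset.mem_Iic] using hk))
      have e2 : ∑ k ∈ Finset.Iic j, (μ' k - i) + (Finset.Iic j).card * i
          = ∑ k ∈ Finset.Iic j, μ' k := by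
        rw [hcard, ← Finset.sum_add_distrib]
        apply Finset.sum_congr rfl
        intro k hk
        have := hge k (Finset.mem_Iic.mp hk)
        omega
      have e3 : ∑ k ∈ Finset.Iic j, μ k ≤ ∑ k, (μ k - i) + (Finset.Iic j).card * i := by
        calc ∑ k ∈ Finset.Iic j, μ k
            ≤ ∑ k ∈ Finset.Iic j, ((μ k - i) + i) := by
              apply Finset.sum_le_sum
              intro k _
              omega
          _ = ∑ k ∈ Finset.Iic j, (μ k - i) + (Finset.Iic j).card * i := by
              rw [hcard, ← Finset.sum_add_distrib]
          _ ≤ ∑ k, (μ k - i) + (Finset.Iic j).card * i := by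
              gcongr
              exact Finset.subset_univ _
      have hfin : ∑ k, (μ' k - i) + (Finset.Iic j).card * i
          ≤ ∑ k, (μ k - i) + (Finset.Iic j).card * i := by
        rw [e1, e2]
        exact le_trans (h j) e3
      omega
    · have hall : ∀ k : Fin n, μ' k - i = 0 := by
        intro k
        by_contra hc
        exact hT ⟨k, by simp; omega⟩
      calc ∑ k, (μ' k - i) = 0 := Finset.sum_eq_zero fun k _ => hall k
        _ ≤ _ := Nat.zero_le _

end Aux

/-- Degeneration of nilpotent orbits (rank formulation): for nilpotent n×n matrices N, N'
over an algebraically closed field with Jordan types μ, μ' respectively (encoded via linear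
isomorphisms to direct sums of nilpotent Jordan blocks), the rank inequalities
rank(N'ⁱ) ≤ rank(Nⁱ) for all i ≥ 1 hold if and only if μ' ≤ μ in the dominance order. -/
theorem rank_le_iff_dominance {K : Type*} [Field K] [IsAlgClosed K] {n : ℕ}
    (μ μ' : Fin n → ℕ) (hμ : Antitone μ) (hμ' : Antitone μ')
    (hsum : ∑ k, μ k = n) (hsum' : ∑ k, μ' k = n)
    (N N' : Matrix (Fin n) (Fin n) K) (hnil : IsNilpotent N) (hnil' : IsNilpotent N')
    (e : (Fin n → K) ≃ₗ[K] ((k : Fin n) → Fin (μ k) → K))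
    (he : ∀ (v : Fin n → K) (k : Fin n) (i : Fin (μ k)),
      e (N.mulVec v) k i =
        if h : (i : ℕ) + 1 < μ k then e v k ⟨(i : ℕ) + 1, h⟩ else 0)
    (e' : (Fin n → K) ≃ₗ[K] ((k : Fin n) → Fin (μ' k) → K))
    (he' : ∀ (v : Fin n → K) (k : Fin n) (i : Fin (μ' k)),
      e' (N'.mulVec v) k i =
        if h : (i : ℕ) + 1 < μ' k then e' v k ⟨(i : ℕ) + 1, h⟩ else 0) :
    (∀ i : ℕ, 1 ≤ i → (N' ^ i).rank ≤ (N ^ i).rank) ↔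
      (∀ j : Fin n, ∑ i ∈ Finset.Iic j, μ' i ≤ ∑ i ∈ Finset.Iic j, μ i) := by
  have h1 : ∀ m : ℕ, (N ^ m).rank = ∑ k, (μ k - m) := rank_pow_eq μ N e he
  have h2 : ∀ m : ℕ, (N' ^ m).rank = ∑ k, (μ' k - m) := rank_pow_eq μ' N' e' he'
  simp only [h1, h2]
  exact dominance_combo μ μ' hμ hμ' hsum hsum'
end
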